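/- arXiv:2503.09519 — 2 statements merged into one kernel-verified Lean document; each statement's English description precedes it below -/
import Mathlib

section
/- Let m = 2p+1 and suppose the monic polynomial P_m of degree m is given by the determinant formula P_m(x) = C·det(A(x)), where A(x) is the (m+1)×(m+1) matrix whose first m rows are (μ_i, μ_{i+1}, …, μ_{i+m}) for i = 0,…,m−1 and whose last row is (1, x, x², …, x^m), with moments satisfying μ_k = μ_{4p+1−k} for 0 ≤ k ≤ 4p+1. Then P_m(x) = −x^m·P_m(1/x) for all x ≠ 0. -/
/-- Let `m = 2p+1` and let `P_m(x) = C·det A(x)`, where `A(x)` is the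
`(m+1)×(m+1)` matrix whose row `i` (for `0 ≤ i < m`) is `(μ_i, μ_{i+1}, …, μ_{i+m})`
and whose last row is `(1, x, x², …, x^m)`. If the moments satisfy
`μ_k = μ_{4p+1−k}` for `0 ≤ k ≤ 4p+1`, then `P_m(x) = −x^m · P_m(1/x)` for `x ≠ 0`. -/
theorem Pm_palindromic (p : ℕ) (hp : 0 < p) (μ : ℕ → ℂ)
    (hμ : ∀ k ≤ 4 * p + 1, μ k = μ (4 * p + 1 - k)) (C : ℂ)
    (P : ℂ → ℂ)
    (hP : ∀ x : ℂ, P x = C * Matrix.det (Matrix.of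
      (fun i j : Fin (2 * p + 1 + 1) =>
        if (i : ℕ) < 2 * p + 1 then μ ((i : ℕ) + (j : ℕ)) else x ^ (j : ℕ)))) :
    ∀ x : ℂ, x ≠ 0 → P x = -x ^ (2 * p + 1) * P (1 / x) := by
  intro x hx
  rw [hP x, hP (1/x)]
  set B : Matrix (Fin (2*p+1+1)) (Fin (2*p+1+1)) ℂ :=
    Matrix.of (fun i j : Fin (2*p+1+1) =>
      if (i:ℕ) < 2*p+1 then μ ((i:ℕ)+(j:ℕ)) else (1/x) ^ (j:ℕ)) with hB
  set A : Matrix (Fin (2*p+1+1)) (Fin (2*p+1+1)) ℂ :=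
    Matrix.of (fun i j : Fin (2*p+1+1) =>
      if (i:ℕ) < 2*p+1 then μ ((i:ℕ)+(j:ℕ)) else x ^ (j:ℕ)) with hA
  suffices h : A.det = -x^(2*p+1) * B.det by
    rw [h]; ring
  set σ : Equiv.Perm (Fin (2*p+1+1)) := (finRotate (2*p+1+1)).trans (Fin.revPerm) with hσ
  have hσval : ∀ i : Fin (2*p+1+1),
      (σ i : ℕ) = if (i:ℕ) < 2*p+1 then 2*p - (i:ℕ) else 2*p+1 := by
    intro i
    have hi := i.isLt
    simp only [hσ, Equiv.trans_apply, finRotate_succ_apply, Fin.revPerm_apply, Fin.val_rev]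
    by_cases hl : i = Fin.last (2*p+1)
    · subst hl
      have h0 : ((Fin.last (2*p+1) + 1 : Fin (2*p+1+1)) : ℕ) = 0 := by
        simp
      rw [h0]
      rw [if_neg (by simp [Fin.val_last])]
      simp [Fin.val_last]
    · have hlt : i < Fin.last (2*p+1) := lt_of_le_of_ne (Fin.le_last i) hl
      rw [Fin.val_add_one_of_lt hlt]
      have hiv : (i:ℕ) < 2*p+1 := by
        have := hlt
        rw [Fin.lt_iff_val_lt_val, Fin.val_last] at this
        exact this
      rw [if_pos hiv]
      omega
  have hrevval : ∀ j : Fin (2*p+1+1), ((Fin.revPerm j : Fin (2*p+1+1)) : ℕ) = 2*p+1 - (j:ℕ) := by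
    intro j
    simp [Fin.val_rev]
  set d : Fin (2*p+1+1) → ℂ := fun i => if (i:ℕ) < 2*p+1 then (1:ℂ) else x^(2*p+1) with hd
  have hAeq : A = Matrix.diagonal d * ((B.submatrix id Fin.revPerm).submatrix σ id) := by
    ext i j
    rw [Matrix.diagonal_mul]
    have hi := i.isLt
    have hj := j.isLt
    simp only [hA, hd, Matrix.submatrix_apply, id_eq, hB, Matrix.of_apply, hσval, hrevval]
    by_cases h : (i:ℕ) < 2*p+1
    · simp only [if_pos h]
      have hσlt : 2*p - (i:ℕ) < 2*p+1 := by omega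
      rw [if_pos hσlt, one_mul]
      have harith : 2*p - (i:ℕ) + (2*p+1 - (j:ℕ)) = 4*p+1 - ((i:ℕ)+(j:ℕ)) := by omega
      rw [harith]
      exact hμ _ (by omega)
    · simp only [if_neg h]
      rw [if_neg (lt_irrefl _)]
      rw [one_div, inv_pow, eq_comm, mul_inv_eq_iff_eq_mul₀ (pow_ne_zero _ hx), ← pow_add]
      congr 1
      omega
  have hsign : ((Equiv.Perm.sign σ : ℤ) : ℂ) *
      ((Equiv.Perm.sign (Fin.revPerm : Equiv.Perm (Fin (2*p+1+1))) : ℤ) : ℂ) = -1 := by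
    have h1 : Equiv.Perm.sign σ =
        Equiv.Perm.sign (Fin.revPerm : Equiv.Perm (Fin (2*p+1+1))) *
          Equiv.Perm.sign (finRotate (2*p+1+1)) := by
      have : σ = (Fin.revPerm : Equiv.Perm (Fin (2*p+1+1))) * finRotate (2*p+1+1) := rfl
      rw [this, map_mul]
    rw [h1, sign_finRotate]
    have hodd : Odd (2*p+1) := ⟨p, by ring⟩
    rw [Nat.add_sub_cancel, hodd.neg_one_pow]
    rcases Int.units_eq_one_or (Equiv.Perm.sign (Fin.revPerm : Equiv.Perm (Fin (2*p+1+1)))) with h | h <;>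
      rw [h] <;> norm_num
  have hdet : Matrix.det (Matrix.diagonal d) = x^(2*p+1) := by
    rw [Matrix.det_diagonal, Fin.prod_univ_castSucc]
    have h1 : ∀ i : Fin (2*p+1), d (Fin.castSucc i) = 1 := by
      intro i
      simp only [hd, Fin.coe_castSucc]
      rw [if_pos i.isLt]
    have h2 : d (Fin.last (2*p+1)) = x^(2*p+1) := by
      simp only [hd, Fin.val_last]
      rw [if_neg (lt_irrefl _)]
    simp [h1, h2]
  rw [hAeq, Matrix.det_mul, hdet, Matrix.det_permute, Matrix.det_permute']
  linear_combination (x^(2*p+1) * B.det) * hsign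
end

section
/- Let {z_j}_{−p≤j≤p} be 2p+1 distinct nonzero complex numbers with z_0 = 1 and z_{−j} = 1/z_j, and let μ_0, …, μ_{4p+1} be complex numbers with μ_k = μ_{4p+1−k}. If {u_j}_{−p≤j≤p} is the unique solution of the linear system Σ_{j=−p}^p u_j z_j^k = μ_k for k = 0, 1, …, 2p (a Vandermonde system), and this solution also satisfies the equations for k = 2p+1, …, 4p+1, then u_{−j} = z_j^{4p+1} u_j for all −p ≤ j ≤ p. -/
open Finset

/-- Vandermonde-type vanishing lemma: if a vector `c` is orthogonal to all
power rows `y ^ m`, `m < s.card`, at distinct nodes `y j`, then `c` vanishes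
on `s`. -/
lemma vandermonde_vanish {s : Finset ℤ} {y c : ℤ → ℂ} (hy : Set.InjOn y s)
    (h : ∀ m < s.card, ∑ j ∈ s, c j * y j ^ m = 0) : ∀ j ∈ s, c j = 0 := by
  intro j0 hj0
  set P := Lagrange.basis s y j0 with hP
  have hdeg : P.natDegree = s.card - 1 := Lagrange.natDegree_basis hy hj0
  have hcard : 0 < s.card := Finset.card_pos.2 ⟨j0, hj0⟩
  have key : ∑ j ∈ s, c j * P.eval (y j) = c j0 := by
    rw [Finset.sum_eq_single j0]
    · rw [Lagrange.eval_basis_self hy hj0, mul_one]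
    · intro j hj hne
      rw [Lagrange.eval_basis_of_ne (Ne.symm hne) hj, mul_zero]
    · intro hj; exact absurd hj0 hj
  have key2 : ∑ j ∈ s, c j * P.eval (y j) = 0 := by
    have heval : ∀ j, P.eval (y j) =
        ∑ m ∈ Finset.range s.card, P.coeff m * y j ^ m := by
      intro j
      exact Polynomial.eval_eq_sum_range' (by omega) _
    simp_rw [heval, Finset.mul_sum]
    rw [Finset.sum_comm]
    refine Finset.sum_eq_zero fun m hm => ?_
    have : ∀ j ∈ s, c j * (P.coeff m * y j ^ m) = P.coeff m * (c j * y j ^ m) := by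
      intro j _; ring
    rw [Finset.sum_congr rfl this, ← Finset.mul_sum, h m (Finset.mem_range.1 hm), mul_zero]
  rw [key2] at key
  exact key.symm

/-- Let `{z_j}_{−p≤j≤p}` be distinct nonzero complex numbers with `z_0 = 1`,
`z_{−j} = 1/z_j`, and let `μ_k` satisfy `μ_k = μ_{4p+1−k}`. If the weights
`{u_j}` solve `Σ_j u_j z_j^k = μ_k` for all `k = 0, …, 4p+1` (in particular they
are the unique solution of the Vandermonde system given by `k = 0, …, 2p`),
then `u_{−j} = z_j^{4p+1} u_j`. -/
theorem weights_symmetry (p : ℕ) (hp : 0 < p) (z u : ℤ → ℂ) (μ : ℕ → ℂ)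
    (hz0 : z 0 = 1)
    (hzinv : ∀ j ∈ Icc (-(p : ℤ)) p, z (-j) = 1 / z j)
    (hzne : ∀ j ∈ Icc (-(p : ℤ)) p, z j ≠ 0)
    (hzdistinct : ∀ i ∈ Icc (-(p : ℤ)) p, ∀ j ∈ Icc (-(p : ℤ)) p, z i = z j → i = j)
    (hμ : ∀ k ≤ 4 * p + 1, μ k = μ (4 * p + 1 - k))
    (hsys : ∀ k ≤ 4 * p + 1, ∑ j ∈ Icc (-(p : ℤ)) p, u j * z j ^ k = μ k) :
    ∀ j ∈ Icc (-(p : ℤ)) p, u (-j) = z j ^ (4 * p + 1) * u j := by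
  set s : Finset ℤ := Icc (-(p : ℤ)) p with hs
  have hmem : ∀ j : ℤ, j ∈ s ↔ -(p : ℤ) ≤ j ∧ j ≤ p := by
    intro j; simp [hs, Finset.mem_Icc]
  have hmemneg : ∀ j ∈ s, -j ∈ s := by
    intro j hj; rw [hmem] at *; omega
  have hcards : s.card = 2 * p + 1 := by
    rw [hs, Int.card_Icc]; omega
  -- reindexing lemma
  have hneg : ∀ f : ℤ → ℂ, ∑ j ∈ s, f (-j) = ∑ j ∈ s, f j := by
    intro f
    refine Finset.sum_nbij' (fun i => -i) (fun i => -i) ?_ ?_ ?_ ?_ ?_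
    · intro a ha; exact hmemneg a ha
    · intro a ha; exact hmemneg a ha
    · intro a _; ring
    · intro a _; ring
    · intro a _; rfl
  -- the nodes
  set y : ℤ → ℂ := fun j => z (-j) with hy
  have hyinj : Set.InjOn y s := by
    intro a ha b hb hab
    have := hzdistinct (-a) (hmemneg a ha) (-b) (hmemneg b hb) hab
    omega
  set c : ℤ → ℂ := fun j => u (-j) - z j ^ (4 * p + 1) * u j with hc
  have hvanish : ∀ m < s.card, ∑ j ∈ s, c j * y j ^ m = 0 := by
    intro m hm
    rw [hcards] at hm
    have hm' : m ≤ 4 * p + 1 := by omega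
    have hsplit : ∑ j ∈ s, c j * y j ^ m =
        (∑ j ∈ s, u (-j) * z (-j) ^ m) -
        ∑ j ∈ s, z j ^ (4 * p + 1) * u j * z (-j) ^ m := by
      rw [← Finset.sum_sub_distrib]
      refine Finset.sum_congr rfl fun j hj => ?_
      simp only [hc, hy]; ring
    have h1 : (∑ j ∈ s, u (-j) * z (-j) ^ m) = μ m := by
      rw [hneg (fun j => u j * z j ^ m)]
      exact hsys m (by omega)
    have h2 : (∑ j ∈ s, z j ^ (4 * p + 1) * u j * z (-j) ^ m) = μ m := by
      have hstep : ∀ j ∈ s, z j ^ (4 * p + 1) * u j * z (-j) ^ m =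
          u j * z j ^ (4 * p + 1 - m) := by
        intro j hj
        rw [hzinv j hj]
        have hzj := hzne j hj
        have hpow : z j ^ (4 * p + 1) = z j ^ (4 * p + 1 - m) * z j ^ m := by
          rw [← pow_add]; congr 1; omega
        rw [hpow]
        field_simp
        ring_nf
        rw [mul_comm (z j ^ m), mul_assoc, ← mul_pow, mul_inv_cancel₀ hzj, one_pow, mul_one]
      rw [Finset.sum_congr rfl hstep, hsys (4 * p + 1 - m) (by omega),
        ← hμ m hm']
    rw [hsplit, h1, h2, sub_self]
  intro j hj
  have := vandermonde_vanish hyinj hvanish j hj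
  simp only [hc] at this
  linear_combination this
end
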